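/- arXiv:0903.3822 — 2 statements merged into one kernel-verified Lean document; each statement's English description precedes it below -/
import Mathlib

section
/- For n ∈ ℕ, q ≠ 0 with q^k ≠ 1 for all positive integers k, and α with q^{α+1} generic (−α ∉ ℕ), the (n+1)×(n+1) Hankel matrix with (j,k)-entry (q^{α+1};q)_{j+k} · q^{-binom(j+k,2)} has determinant q^{-n(n+1)(4n-1)/6} · Π_{k=1}^n (q;q)_k (q^{α+1};q)_k. -/
open Finset

/-- finite q-Pochhammer symbol `(a;q)_m = ∏_{i=0}^{m-1} (1 - a q^i)` -/
noncomputable def qPoch (a q : ℂ) (n : ℕ) : ℂ :=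
  ∏ i ∈ Finset.range n, (1 - a * q ^ i)

/-!
With `x_j = q^{-j}`, the Hankel entry factors as
`(c;q)_{j+k} q^{-binom(j+k,2)} = (c;q)_j q^{-binom(j,2)} · q^{-binom(k,2)} · ∏_{i<k} (x_j - c q^i)`,
because `(c;q)_{j+k} = (c;q)_j (cq^j;q)_k` and `binom(j+k,2) = binom(j,2) + binom(k,2) + jk`.
The last factor is a monic polynomial of degree `k` evaluated at `x_j`, so after pulling out the
row and column factors the determinant is the Vandermonde determinant of the `x_j`, namely
`∏_j ∏_{i<j} (q^{-j} - q^{-i}) = ∏_j q^{-j²} (q;q)_j`. Collecting powers of `q` gives the exponent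
`-∑_{j≤n} (2 binom(j,2) + j²) = -n(n+1)(4n-1)/6`.
-/

open Polynomial

theorem Nat.add_choose_two (j k : ℕ) :
    (j + k).choose 2 = j.choose 2 + k.choose 2 + j * k := by
  induction k with
  | zero => simp
  | succ k ih =>
    rw [← add_assoc, Nat.choose_succ_succ', Nat.choose_succ_succ' k, ih, Nat.choose_one_right,
      Nat.choose_one_right]
    ring

theorem Nat.sum_range_succ_two_mul_choose_two_add_mul_self (n : ℕ) :
    ∑ j ∈ range (n + 1), (2 * j.choose 2 + j * j) = n * (n + 1) * (4 * n - 1) / 6 := by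
  suffices h : 6 * ∑ j ∈ range (n + 1), (2 * j.choose 2 + j * j) = n * (n + 1) * (4 * n - 1) by
    omega
  induction n with
  | zero => simp
  | succ n ih =>
    have h2 : 2 * (n + 1).choose 2 = (n + 1) * n := by
      rw [mul_comm, ← Nat.add_one_mul_choose_eq, Nat.choose_one_right]
    rw [sum_range_succ, mul_add, ih, h2]
    cases n with
    | zero => norm_num
    | succ m =>
      rw [show 4 * (m + 1) - 1 = 4 * m + 3 by omega, show 4 * (m + 1 + 1) - 1 = 4 * m + 7 by omega]
      ring

theorem Finset.prod_range_succ_eq_prod_Icc_one {M : Type*} [CommMonoid M] {f : ℕ → M}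
    (h0 : f 0 = 1) (n : ℕ) : ∏ i ∈ range (n + 1), f i = ∏ i ∈ Icc 1 n, f i := by
  rw [range_eq_Ico, prod_eq_prod_Ico_succ_bot n.add_one_pos, h0, one_mul,
    Ico_add_one_right_eq_Icc]

namespace Matrix

variable {R : Type*} [CommRing R]

theorem det_of_mul_mul_eval_eq_mul_det_vandermonde {n : ℕ} (r s v : Fin n → R)
    (p : Fin n → R[X]) (h_deg : ∀ i, (p i).natDegree = i) (h_monic : ∀ i, (p i).Monic) :
    (of fun i j => r i * s j * (p j).eval (v i)).det
      = (∏ i, r i) * (∏ j, s j) * (vandermonde v).det := by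
  have hfactor : (of fun i j => r i * s j * (p j).eval (v i))
      = of fun i j => r i * (of fun i j => s j * (of fun i j => (p j).eval (v i)) i j) i j := by
    ext i j
    simp [mul_assoc]
  rw [hfactor, det_mul_column, det_mul_row,
    ← det_eval_matrixOfPolynomials_eq_det_vandermonde v p h_deg h_monic, mul_assoc]

theorem det_vandermonde_pow (x : R) (n : ℕ) :
    (vandermonde fun i : Fin n => x ^ (i : ℕ)).det
      = ∏ j ∈ range n, ∏ i ∈ range j, (x ^ j - x ^ i) := by
  rw [det_vandermonde, prod_comm' (s' := fun j => Iio j) (t' := univ) (by simp),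
    ← Fin.prod_univ_eq_prod_range]
  refine prod_congr rfl fun j _ => ?_
  rw [← Nat.Iio_eq_range, ← Fin.map_valEmbedding_Iio, prod_map]
  rfl

end Matrix

/-- `x^k (a/x;q)_k` as a polynomial in `x`. -/
noncomputable def qPochPoly {R : Type*} [CommRing R] (a q : R) (k : ℕ) : R[X] :=
  ∏ i ∈ range k, (X - C (a * q ^ i))

section qPochPoly

variable {R : Type*} [CommRing R] (a q : R) (k : ℕ)

theorem qPochPoly_monic : (qPochPoly a q k).Monic :=
  monic_prod_X_sub_C _ _

theorem natDegree_qPochPoly [Nontrivial R] : (qPochPoly a q k).natDegree = k := by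
  rw [qPochPoly, natDegree_finsetProd_X_sub_C_eq_card, card_range]

theorem eval_qPochPoly (x : R) : (qPochPoly a q k).eval x = ∏ i ∈ range k, (x - a * q ^ i) := by
  simp [qPochPoly, eval_prod]

end qPochPoly

theorem qPoch_add (a q : ℂ) (m k : ℕ) :
    qPoch a q (m + k) = qPoch a q m * qPoch (a * q ^ m) q k := by
  simp only [qPoch, prod_range_add, mul_assoc, ← pow_add]

theorem pow_mul_qPoch (x a q : ℂ) (k : ℕ) :
    x ^ k * qPoch a q k = ∏ i ∈ range k, (x - x * a * q ^ i) := by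
  rw [qPoch, ← card_range k, ← prod_const, card_range, ← prod_mul_distrib]
  simp only [mul_sub, mul_one, mul_assoc]

theorem prod_range_inv_pow_sub_inv_pow {q : ℂ} (hq : q ≠ 0) (j : ℕ) :
    ∏ i ∈ range j, (q⁻¹ ^ j - q⁻¹ ^ i) = q⁻¹ ^ (j * j) * qPoch q q j := by
  rw [pow_mul, pow_mul_qPoch, ← prod_range_reflect]
  refine prod_congr rfl fun i hi => ?_
  obtain ⟨d, rfl⟩ : ∃ d, j = d + i + 1 := ⟨j - 1 - i, by have := mem_range.1 hi; omega⟩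
  rw [show d + i + 1 - 1 - i = d by omega]
  congr 1
  rw [pow_succ, pow_add, inv_pow q i]
  field_simp

theorem qPoch_add_mul_inv_pow_choose_two {q : ℂ} (hq : q ≠ 0) (c : ℂ) (j k : ℕ) :
    qPoch c q (j + k) * (q ^ (j + k).choose 2)⁻¹
      = qPoch c q j * q⁻¹ ^ j.choose 2 * q⁻¹ ^ k.choose 2 * (qPochPoly c q k).eval (q⁻¹ ^ j) := by
  have hshift : (q⁻¹ ^ j) ^ k * qPoch (c * q ^ j) q k = (qPochPoly c q k).eval (q⁻¹ ^ j) := by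
    have hcancel : q⁻¹ ^ j * (c * q ^ j) = c := by
      rw [inv_pow, mul_comm c, inv_mul_cancel_left₀ (pow_ne_zero j hq)]
    rw [pow_mul_qPoch, hcancel, eval_qPochPoly]
  rw [← hshift, qPoch_add, Nat.add_choose_two, ← inv_pow, pow_add, pow_add, ← pow_mul]
  ring

theorem q_laguerre_hankel_det_general (n : ℕ) (q c : ℂ)
    (hq0 : q ≠ 0) :
    (Matrix.of fun j k : Fin (n + 1) =>
        qPoch c q ((j : ℕ) + (k : ℕ)) * (q ^ (((j : ℕ) + (k : ℕ)).choose 2))⁻¹).det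
      = (q ^ (n * (n + 1) * (4 * n - 1) / 6))⁻¹ *
        ∏ k ∈ Finset.Icc 1 n, qPoch q q k * qPoch c q k := by
  simp_rw [qPoch_add_mul_inv_pow_choose_two hq0]
  rw [Matrix.det_of_mul_mul_eval_eq_mul_det_vandermonde _ _ (fun j => q⁻¹ ^ (j : ℕ)) _
      (fun k => natDegree_qPochPoly c q k) (fun k => qPochPoly_monic c q k),
    Matrix.det_vandermonde_pow,
    Fin.prod_univ_eq_prod_range (fun j => qPoch c q j * q⁻¹ ^ j.choose 2),
    Fin.prod_univ_eq_prod_range (fun k => q⁻¹ ^ k.choose 2), ← prod_mul_distrib,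
    ← prod_mul_distrib, ← prod_range_succ_eq_prod_Icc_one (by simp [qPoch]), ← inv_pow,
    ← Nat.sum_range_succ_two_mul_choose_two_add_mul_self, ← prod_pow_eq_pow_sum,
    ← prod_mul_distrib]
  refine prod_congr rfl fun j _ => ?_
  rw [prod_range_inv_pow_sub_inv_pow hq0]
  ring

/-- The Hankel determinant of the q-Laguerre moment matrix (with `c = q^{α+1}`):
`det ((c;q)_{j+k} q^{-binom(j+k,2)}) = q^{-n(n+1)(4n-1)/6} ∏_{k=1}^n (q;q)_k (c;q)_k`. -/
theorem q_laguerre_hankel_det (n : ℕ) (q c : ℂ)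
    (hq0 : q ≠ 0) (hq : ∀ k : ℕ, 1 ≤ k → q ^ k ≠ 1)
    (hc : ∀ k : ℕ, c * q ^ k ≠ 1) :
    (Matrix.of fun j k : Fin (n + 1) =>
        qPoch c q ((j : ℕ) + (k : ℕ)) * (q ^ (((j : ℕ) + (k : ℕ)).choose 2))⁻¹).det
      = (q ^ (n * (n + 1) * (4 * n - 1) / 6))⁻¹ *
        ∏ k ∈ Finset.Icc 1 n, qPoch q q k * qPoch c q k :=
  q_laguerre_hankel_det_general n q c hq0
end

section
/- For n ∈ ℕ and q ≠ 0 with q^k ≠ 1 for all k ∈ ℕ (k ≥ 1), the (n+1)×(n+1) matrix with (j,k)-entry equal to 0 if j+k is odd and q^{-(j+k)²/4}(q;q²)_{(j+k)/2} if j+k is even, has determinant q^{-n(n+1)(2n+1)/6} Π_{k=0}^n (q;q)_k. (Here exact powers of q may require q > 0 real or a chosen branch; equivalently work with the squared determinant or restrict to even-powered formulation.) -/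
open Finset

/-!
Ordering the indices evens first, then odds, makes the matrix block diagonal, with the Hankel
matrices `(ν (a + b))` and `(ν (a + b + 1))` of the moments `ν m = q^{-m²} (q;q²)_m` as blocks.
These moments satisfy `ν (m + 1) = (x^{2m+1} - 1) ν m` with `x = q⁻¹`, so subtracting
`x^{2a+2r+1} - 1` times row `a` from row `a + 1` of `(ν (a + b + r))` clears its first column
below `ν r` and leaves, as the complementary minor, `(ν (a + b + r + 1))` with row `a` scaled by
`x^{2a+2r+1}` and column `b` by `x^{2b+2} - 1`. Iterating gives a product formula for every shifted
Hankel determinant; for `r = 0, 1` its factors are `q^{-k²} (q;q)_k` for even and odd `k`.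
-/

theorem prod_range_eq_prod_even_mul_prod_odd {M : Type*} [CommMonoid M] (f : ℕ → M) (m : ℕ) :
    ∏ k ∈ range m, f k =
      (∏ t ∈ range ((m + 1) / 2), f (2 * t)) * ∏ t ∈ range (m / 2), f (2 * t + 1) := by
  induction m with
  | zero => simp
  | succ m ih =>
    obtain ⟨j, rfl | rfl⟩ := Nat.even_or_odd' m
    · rw [show (2 * j + 1 + 1) / 2 = j + 1 by omega, show (2 * j + 1) / 2 = j by omega,
        prod_range_succ, ih, show (2 * j + 1) / 2 = j by omega, show 2 * j / 2 = j by omega,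
        prod_range_succ]
      ac_rfl
    · rw [show (2 * j + 1 + 1 + 1) / 2 = j + 1 by omega, show (2 * j + 1 + 1) / 2 = j + 1 by omega,
        prod_range_succ, ih, show (2 * j + 1 + 1) / 2 = j + 1 by omega,
        show (2 * j + 1) / 2 = j by omega, prod_range_succ, prod_range_succ _ j, mul_assoc]

theorem sum_range_succ_sq (n : ℕ) :
    ∑ k ∈ range (n + 1), k ^ 2 = n * (n + 1) * (2 * n + 1) / 6 := by
  refine (Nat.div_eq_of_eq_mul_left (by norm_num) ?_).symm
  induction n with
  | zero => simp
  | succ n ih => rw [sum_range_succ]; linarith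

noncomputable def evenOddEquiv (m : ℕ) : Fin ((m + 1) / 2) ⊕ Fin (m / 2) ≃ Fin m :=
  Equiv.ofBijective
    (Sum.elim (fun a => ⟨2 * a, by omega⟩) fun b => ⟨2 * b + 1, by omega⟩)
    ((Fintype.bijective_iff_injective_and_card _).mpr
      ⟨by rintro (a | a) (b | b) h <;> simp [Fin.ext_iff] at h ⊢ <;> omega,
        by simp; omega⟩)

section Hankel

variable {R : Type*} [CommRing R]

def hankel (ν : ℕ → R) (r s : ℕ) : Matrix (Fin s) (Fin s) R :=
  Matrix.of fun a b => ν (a + b + r)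

theorem det_checkerboard (μ : ℕ → R) (m : ℕ) :
    (Matrix.of fun j k : Fin m =>
        if Even ((j : ℕ) + (k : ℕ)) then μ (((j : ℕ) + (k : ℕ)) / 2) else 0).det =
      (hankel μ 0 ((m + 1) / 2)).det * (hankel μ 1 (m / 2)).det := by
  rw [← Matrix.det_submatrix_equiv_self (evenOddEquiv m),
    ← Matrix.det_fromBlocks_zero₂₁ _ 0]
  congr 1
  ext (a | a) (b | b) <;> simp [evenOddEquiv, hankel, parity_simps] <;> congr 1 <;>
    omega

def hankelFactor (x : R) (r t : ℕ) : R :=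
  ∏ b ∈ range t, x ^ (4 * b + 2 * r + 1) * (x ^ (2 * b + 2) - 1)

theorem hankelFactor_succ (x : R) (r t : ℕ) :
    hankelFactor x r (t + 1) =
      hankelFactor x r t * (x ^ (4 * t + 2 * r + 1) * (x ^ (2 * t + 2) - 1)) :=
  prod_range_succ _ _

theorem hankelFactor_succ_left (x : R) (r t : ℕ) :
    hankelFactor x (r + 1) t = x ^ (2 * t) * hankelFactor x r t := by
  simp_rw [hankelFactor, show ∀ b, 4 * b + 2 * (r + 1) + 1 = 2 + (4 * b + 2 * r + 1) by
      intro b; ring,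
    pow_add, mul_assoc, prod_mul_distrib, prod_const, card_range, ← pow_mul]

variable {x : R} {ν : ℕ → R}

theorem det_hankel_succ (hν : ∀ m, ν (m + 1) = (x ^ (2 * m + 1) - 1) * ν m) (r s : ℕ) :
    (hankel ν r (s + 1)).det =
      ν r * (∏ t ∈ range s, x ^ (2 * t + 2 * r + 1) * (x ^ (2 * t + 2) - 1)) *
        (hankel ν (r + 1) s).det := by
  set N : Matrix (Fin (s + 1)) (Fin (s + 1)) R := Matrix.of (Fin.cons (fun b => ν (b + r))
    fun a b => x ^ (2 * (a : ℕ) + 2 * r + 1) * (x ^ (2 * (b : ℕ)) - 1) * ν (a + b + r))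
  have hrow : (hankel ν r (s + 1)).det = N.det := by
    refine Matrix.det_eq_of_forall_row_eq_smul_add_pred
      (fun a => x ^ (2 * (a : ℕ) + 2 * r + 1) - 1) (fun b => by simp [hankel, N]) fun a b => ?_
    simp only [hankel, N, Matrix.of_apply, Fin.cons_succ, Fin.val_succ, Fin.val_castSucc]
    rw [show (a : ℕ) + 1 + b + r = a + b + r + 1 by ring, hν]
    ring
  have hminor : N.submatrix Fin.succ Fin.succ = Matrix.of fun a b : Fin s =>
      x ^ (2 * (a : ℕ) + 2 * r + 1) * Matrix.of
        (fun i j : Fin s => (x ^ (2 * (j : ℕ) + 2) - 1) * hankel ν (r + 1) s i j) a b := by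
    ext a b
    simp only [N, hankel, Matrix.submatrix_apply, Matrix.of_apply, Fin.cons_succ, Fin.val_succ]
    rw [show (a : ℕ) + (b + 1) + r = a + b + (r + 1) by ring]
    ring
  have hcol : ∀ i : Fin s, N i.succ 0 = 0 := by simp [N]
  rw [hrow, Matrix.det_succ_column_zero, Fin.sum_univ_succ]
  simp only [hcol, mul_zero, zero_mul, sum_const_zero, add_zero, Fin.succAbove_zero, hminor,
    Matrix.det_mul_column, Matrix.det_mul_row, prod_mul_distrib,
    Fin.prod_univ_eq_prod_range (fun t => x ^ (2 * t + 2 * r + 1)),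
    Fin.prod_univ_eq_prod_range (fun t => x ^ (2 * t + 2) - 1)]
  simp only [Fin.coe_ofNat_eq_mod, Nat.zero_mod, pow_zero, Matrix.of_apply, Fin.cons_zero,
    zero_add, one_mul, N]
  ring

theorem det_hankel_eq_prod (hν : ∀ m, ν (m + 1) = (x ^ (2 * m + 1) - 1) * ν m) (r s : ℕ) :
    (hankel ν r s).det = ∏ t ∈ range s, ν (r + t) * hankelFactor x r t := by
  induction s generalizing r with
  | zero => simp [hankel]
  | succ s ih =>
    rw [det_hankel_succ hν, ih, prod_range_succ', mul_assoc, mul_comm, ← prod_mul_distrib]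
    refine congrArg₂ (· * ·) (prod_congr rfl fun t _ => ?_) (by simp [hankelFactor])
    rw [hankelFactor_succ_left, hankelFactor_succ, show r + 1 + t = r + (t + 1) by ring]
    ring

end Hankel

theorem qPoch_succ (a q : ℂ) (n : ℕ) : qPoch a q (n + 1) = qPoch a q n * (1 - a * q ^ n) :=
  prod_range_succ _ _

theorem qPoch_two_mul (a q : ℂ) (n : ℕ) :
    qPoch a q (2 * n) = qPoch a (q ^ 2) n * qPoch (a * q) (q ^ 2) n := by
  rw [qPoch, prod_range_eq_prod_even_mul_prod_odd, show (2 * n + 1) / 2 = n by omega,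
    show 2 * n / 2 = n by omega]
  simp only [qPoch, pow_succ, pow_mul]
  ring_nf

theorem qPoch_two_mul_add_one (a q : ℂ) (n : ℕ) :
    qPoch a q (2 * n + 1) = qPoch a (q ^ 2) (n + 1) * qPoch (a * q) (q ^ 2) n := by
  rw [qPoch, prod_range_eq_prod_even_mul_prod_odd, show (2 * n + 1 + 1) / 2 = n + 1 by omega,
    show (2 * n + 1) / 2 = n by omega]
  simp only [qPoch, pow_succ, pow_mul]
  ring_nf

noncomputable def qHermiteMoment (q : ℂ) (m : ℕ) : ℂ := (q ^ (m ^ 2))⁻¹ * qPoch q (q ^ 2) m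

section QHermite

variable {q : ℂ}

theorem qHermiteMoment_succ (hq : q ≠ 0) (m : ℕ) :
    qHermiteMoment q (m + 1) = (q⁻¹ ^ (2 * m + 1) - 1) * qHermiteMoment q m := by
  rw [qHermiteMoment, qHermiteMoment, qPoch_succ, ← pow_mul,
    show (m + 1) ^ 2 = m ^ 2 + (2 * m + 1) by ring, pow_add, inv_pow]
  field_simp
  ring

theorem hankelFactor_inv (hq : q ≠ 0) (r t : ℕ) :
    hankelFactor q⁻¹ r t = (q ^ (t * (3 * t + 2 * r)))⁻¹ * qPoch (q * q) (q ^ 2) t := by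
  induction t with
  | zero => simp [hankelFactor, qPoch]
  | succ t ih =>
    rw [hankelFactor_succ, ih, qPoch_succ,
      show (t + 1) * (3 * (t + 1) + 2 * r) = t * (3 * t + 2 * r) + (6 * t + 2 * r + 3) by ring,
      pow_add]
    simp only [inv_pow]
    field_simp
    ring

theorem qHermiteMoment_mul_hankelFactor_inv (hq : q ≠ 0) (r t : ℕ) :
    qHermiteMoment q (r + t) * hankelFactor q⁻¹ r t =
      (q ^ ((2 * t + r) ^ 2))⁻¹ * (qPoch q (q ^ 2) (r + t) * qPoch (q * q) (q ^ 2) t) := by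
  rw [qHermiteMoment, hankelFactor_inv hq,
    show (2 * t + r) ^ 2 = (r + t) ^ 2 + t * (3 * t + 2 * r) by ring, pow_add]
  field_simp

theorem det_hankel_qHermiteMoment_zero (hq : q ≠ 0) (s : ℕ) :
    (hankel (qHermiteMoment q) 0 s).det =
      ∏ t ∈ range s, (q ^ ((2 * t) ^ 2))⁻¹ * qPoch q q (2 * t) := by
  rw [det_hankel_eq_prod (qHermiteMoment_succ hq)]
  refine prod_congr rfl fun t _ => ?_
  rw [qHermiteMoment_mul_hankelFactor_inv hq, qPoch_two_mul, zero_add, add_zero]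

theorem det_hankel_qHermiteMoment_one (hq : q ≠ 0) (s : ℕ) :
    (hankel (qHermiteMoment q) 1 s).det =
      ∏ t ∈ range s, (q ^ ((2 * t + 1) ^ 2))⁻¹ * qPoch q q (2 * t + 1) := by
  rw [det_hankel_eq_prod (qHermiteMoment_succ hq)]
  refine prod_congr rfl fun t _ => ?_
  rw [qHermiteMoment_mul_hankelFactor_inv hq, qPoch_two_mul_add_one, add_comm 1 t]

end QHermite

theorem discrete_q_hermite_II_hankel_det_general (n : ℕ) (q : ℂ)
    (hq0 : q ≠ 0) :
    (Matrix.of fun j k : Fin (n + 1) =>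
        if Even ((j : ℕ) + (k : ℕ)) then
          (q ^ (((j : ℕ) + (k : ℕ)) ^ 2 / 4))⁻¹ *
            qPoch q (q ^ 2) (((j : ℕ) + (k : ℕ)) / 2)
        else 0).det
      = (q ^ (n * (n + 1) * (2 * n + 1) / 6))⁻¹ *
        ∏ k ∈ Finset.range (n + 1), qPoch q q k := by
  have hentry : ∀ m : ℕ, Even m → (q ^ (m ^ 2 / 4))⁻¹ * qPoch q (q ^ 2) (m / 2) =
      qHermiteMoment q (m / 2) := by
    rintro m ⟨k, rfl⟩
    rw [qHermiteMoment, ← two_mul, show (2 * k) ^ 2 / 4 = k ^ 2 by ring_nf; omega,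
      Nat.mul_div_cancel_left k two_pos]
  calc _ = (Matrix.of fun j k : Fin (n + 1) => if Even ((j : ℕ) + (k : ℕ)) then
          qHermiteMoment q (((j : ℕ) + (k : ℕ)) / 2) else 0).det := by
        congr; ext j k; split_ifs with h
        · exact hentry _ h
        · rfl
    _ = ∏ k ∈ range (n + 1), (q ^ (k ^ 2))⁻¹ * qPoch q q k := by
        rw [det_checkerboard, det_hankel_qHermiteMoment_zero hq0,
          det_hankel_qHermiteMoment_one hq0]
        exact (prod_range_eq_prod_even_mul_prod_odd
          (fun k => (q ^ (k ^ 2))⁻¹ * qPoch q q k) _).symm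
    _ = _ := by rw [prod_mul_distrib, prod_inv_distrib, prod_pow_eq_pow_sum, sum_range_succ_sq]

/-- The Hankel determinant of the discrete q-Hermite II moment matrix: the matrix whose
`(j,k)`-entry is `0` for `j+k` odd and `q^{-(j+k)²/4} (q;q²)_{(j+k)/2}` for `j+k` even
has determinant `q^{-n(n+1)(2n+1)/6} ∏_{k=0}^n (q;q)_k`. -/
theorem discrete_q_hermite_II_hankel_det (n : ℕ) (q : ℂ)
    (hq0 : q ≠ 0) (hq : ∀ k : ℕ, 1 ≤ k → q ^ k ≠ 1) :
    (Matrix.of fun j k : Fin (n + 1) =>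
        if Even ((j : ℕ) + (k : ℕ)) then
          (q ^ (((j : ℕ) + (k : ℕ)) ^ 2 / 4))⁻¹ *
            qPoch q (q ^ 2) (((j : ℕ) + (k : ℕ)) / 2)
        else 0).det
      = (q ^ (n * (n + 1) * (2 * n + 1) / 6))⁻¹ *
        ∏ k ∈ Finset.range (n + 1), qPoch q q k :=
  discrete_q_hermite_II_hankel_det_general n q hq0
end
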